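/- Let g = 6, let e_1, …, e_{14} ∈ ℂ, let f(x) = ∏_{m=1}^{14}(x − e_m) = ∑_{k=0}^{14} λ_k x^k with Kleinian 2-polar F(x,z), and for each 7-element subset S of {1,…,14} let Λ^{[S]} be the unique symmetric 6×6 matrix with P_S(x)P_{S^c}(z) + P_S(z)P_{S^c}(x) − F(x,z) = (x−z)² ∑_{i,j=1}^{6} Λ^{[S]}_{ij} x^{i−1} z^{j−1}. Then (1/2) ∑_S Λ^{[S]} = [[792λ_2, 330λ_3, 120λ_4, 36λ_5, 8λ_6, λ_7], [330λ_3, 1080λ_4, 492λ_5, 184λ_6, 51λ_7, 8λ_8], [120λ_4, 492λ_5, 1200λ_6, 542λ_7, 184λ_8, 36λ_9], [36λ_5, 184λ_6, 542λ_7, 1200λ_8, 492λ_9, 120λ_{10}], [8λ_6, 51λ_7, 184λ_8, 492λ_9, 1080λ_{10}, 330λ_{11}], [λ_7, 8λ_8, 36λ_9, 120λ_{10}, 330λ_{11}, 792λ_{12}]], the sum running over all 7-element subsets S (equivalently, over the N_6 = 1716 unordered partitions {S, S^c}). -/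

import Mathlib

/-!
Put `H_j(x, z) = ∑_{|S| = j} P_S(x) P_{Sᶜ}(z)`. Expanding the product over the roots,
`∑_j H_j(x, z) t^j = ∏_m (t (x - e_m) + (z - e_m)) = ∏_m ((t x + z) - e_m (t + 1))`, which is the
homogenization of `f` evaluated at `(t x + z, t + 1)`, i.e. `∑_k λ_k (t x + z)^k (t + 1)^(14 - k)`.
Reading off the coefficient of `t^7` writes `H_7` as an explicit binomial expression in the `λ_k`.
Summing the defining identities of the `Λ^[S]` over all `S` then gives
`(x - z)^2 ∑_{a,b} (∑_S Λ^[S])_{ab} x^a z^b = H_7(x, z) + H_7(z, x) - C(14, 7) F(x, z)`, and the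
right-hand side is `(x - z)^2` times an explicit symmetric polynomial, whose coefficients are
`2 Λ_6`. Since `(x - z)^2` is not a zero divisor, the coefficients agree.
-/

open Finset Polynomial

section

variable {R : Type*}

theorem coeff_prod_C_mul_X_add_C [CommSemiring R] {ι : Type*} [DecidableEq ι] (s : Finset ι)
    (a b : ι → R) (j : ℕ) :
    (∏ i ∈ s, (C (a i) * X + C (b i))).coeff j
      = ∑ S ∈ s.powersetCard j, (∏ i ∈ S, a i) * ∏ i ∈ s \ S, b i := by
  rw [Finset.prod_add, finsetSum_coeff, powersetCard_eq_filter, sum_filter]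
  refine sum_congr rfl fun S _ => ?_
  rw [prod_mul_distrib, prod_const, ← map_prod, ← map_prod, mul_right_comm, ← C_mul,
    coeff_C_mul_X_pow]
  exact if_congr eq_comm rfl rfl

theorem coeff_C_mul_X_add_C_pow [CommSemiring R] (a b : R) (k i : ℕ) :
    ((C a * X + C b) ^ k).coeff i = k.choose i * a ^ i * b ^ (k - i) := by
  have h : (C a * X + C b) ^ k = ((X + C b) ^ k).comp (C a * X) := by simp
  rw [h, comp_C_mul_X_coeff, coeff_X_add_C_pow]
  ring

theorem coeff_C_mul_X_add_C_pow_mul_X_add_one_pow [CommSemiring R] (a b : R) (k l j : ℕ) :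
    ((C a * X + C b) ^ k * (X + 1) ^ l).coeff j
      = ∑ ij ∈ antidiagonal j, (k.choose ij.1 * l.choose ij.2 : R) * a ^ ij.1 * b ^ (k - ij.1) := by
  rw [coeff_mul]
  refine sum_congr rfl fun ij _ => ?_
  rw [coeff_C_mul_X_add_C_pow, coeff_X_add_one_pow]
  ring

theorem aeval_homogenize [CommSemiring R] {A : Type*} [CommSemiring A] [Algebra R A]
    (p : R[X]) (n : ℕ) (g : Fin 2 → A) :
    MvPolynomial.aeval g (p.homogenize n)
      = ∑ kl ∈ antidiagonal n, p.coeff kl.1 • (g 0 ^ kl.1 * g 1 ^ kl.2) := by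
  simp [homogenize, MvPolynomial.aeval_monomial, Algebra.smul_def]

theorem prod_sub_smul_eq_sum_antidiagonal [CommRing R] {ι A : Type*} [CommRing A] [Algebra R A]
    (s : Finset ι) (e : ι → R) (u v : A) :
    ∏ i ∈ s, (u - e i • v)
      = ∑ kl ∈ antidiagonal #s, (∏ i ∈ s, (X - C (e i))).coeff kl.1 • (u ^ kl.1 * v ^ kl.2) := by
  have h := aeval_homogenize (∏ i ∈ s, (X - C (e i))) #s ![u, v]
  simp only [Matrix.cons_val_zero, Matrix.cons_val_one] at h
  rw [← h, card_eq_sum_ones, homogenize_finsetProd fun i _ => natDegree_X_sub_C_le (e i)]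
  simp [Algebra.smul_def]

/-- The coefficient of `t ^ j` in `∑_{k ≤ n} c k * (t x + z) ^ k * (t + 1) ^ (n - k)`. -/
def binomialPartitionSum [CommSemiring R] (c : ℕ → R) (n j : ℕ) (x z : R) : R :=
  ∑ kl ∈ antidiagonal n, c kl.1 *
    ∑ ij ∈ antidiagonal j, (kl.1.choose ij.1 * kl.2.choose ij.2 : R) * x ^ ij.1 * z ^ (kl.1 - ij.1)

theorem sum_powersetCard_prod_sub_mul_prod_sdiff_sub [CommRing R] {ι : Type*} [DecidableEq ι]
    (s : Finset ι) (e : ι → R) (j : ℕ) (x z : R) :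
    ∑ S ∈ s.powersetCard j, (∏ i ∈ S, (x - e i)) * ∏ i ∈ s \ S, (z - e i)
      = binomialPartitionSum (∏ i ∈ s, (X - C (e i))).coeff #s j x z := by
  have hfactor : ∏ i ∈ s, (C (x - e i) * X + C (z - e i))
      = ∏ i ∈ s, ((C x * X + C z) - e i • (X + 1)) :=
    prod_congr rfl fun i _ => by rw [smul_eq_C_mul, map_sub, map_sub]; ring
  rw [← coeff_prod_C_mul_X_add_C, hfactor, prod_sub_smul_eq_sum_antidiagonal, finsetSum_coeff]
  simp [binomialPartitionSum, coeff_C_mul_X_add_C_pow_mul_X_add_one_pow]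

theorem sum_powersetCard_prod_sub_mul_prod_compl_sub [CommRing R] [IsDomain R] [Infinite R]
    {ι : Type*} [Fintype ι] [DecidableEq ι] (e : ι → R) (c : ℕ → R)
    (hc : ∀ x, ∏ m, (x - e m) = ∑ k ∈ range (Fintype.card ι + 1), c k * x ^ k)
    (j : ℕ) (x z : R) :
    ∑ S ∈ powersetCard j univ, (∏ i ∈ S, (x - e i)) * ∏ i ∈ Sᶜ, (z - e i)
      = binomialPartitionSum c (Fintype.card ι) j x z := by
  have hf : ∏ m, (X - C (e m)) = ∑ k ∈ range (Fintype.card ι + 1), C (c k) * X ^ k :=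
    Polynomial.funext fun x => by simpa [eval_prod, eval_finsetSum] using hc x
  simp_rw [compl_eq_univ_sdiff]
  rw [sum_powersetCard_prod_sub_mul_prod_sdiff_sub, card_univ]
  refine sum_congr rfl fun kl hkl => ?_
  simp [hf, finsetSum_coeff, Nat.antidiagonal.fst_lt hkl]

def kleinianPolar [CommSemiring R] (c : ℕ → R) (g : ℕ) (x z : R) : R :=
  2 * c (2 * g + 2) * x ^ (g + 1) * z ^ (g + 1)
    + ∑ k ∈ range (g + 1), x ^ k * z ^ k * (2 * c (2 * k) + (x + z) * c (2 * k + 1))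

/-- The matrix `Λ_6` of Example 6.5 of the paper. -/
def genusSixMatrix [CommSemiring R] (c : ℕ → R) : Matrix (Fin 6) (Fin 6) R :=
  !![792 * c 2, 330 * c 3, 120 * c 4, 36 * c 5, 8 * c 6, c 7;
     330 * c 3, 1080 * c 4, 492 * c 5, 184 * c 6, 51 * c 7, 8 * c 8;
     120 * c 4, 492 * c 5, 1200 * c 6, 542 * c 7, 184 * c 8, 36 * c 9;
     36 * c 5, 184 * c 6, 542 * c 7, 1200 * c 8, 492 * c 9, 120 * c 10;
     8 * c 6, 51 * c 7, 184 * c 8, 492 * c 9, 1080 * c 10, 330 * c 11;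
     c 7, 8 * c 8, 36 * c 9, 120 * c 10, 330 * c 11, 792 * c 12]

theorem binomialPartitionSum_add_swap_sub_kleinianPolar_genus_six [CommRing R] (c : ℕ → R)
    (x z : R) :
    binomialPartitionSum c 14 7 x z + binomialPartitionSum c 14 7 z x
        - (Nat.choose 14 7 : R) * kleinianPolar c 6 x z
      = (x - z) ^ 2 * ∑ a : Fin 6, ∑ b : Fin 6,
          ((2 : R) • genusSixMatrix c) a b * x ^ (a : ℕ) * z ^ (b : ℕ) := by
  simp only [binomialPartitionSum, kleinianPolar, genusSixMatrix,
    Finset.Nat.sum_antidiagonal_eq_sum_range_succ_mk, Fin.sum_univ_six, sum_range_succ,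
    sum_range_zero, Matrix.smul_apply, Matrix.of_apply, Matrix.cons_val, Fin.isValue]
  norm_num [Nat.choose]
  ring

theorem eq_zero_of_forall_ne_sum_mul_pow_eq_zero [CommRing R] [IsDomain R] [Infinite R] {n : ℕ}
    (d : Fin n → R) (x₀ : R) (h : ∀ x ≠ x₀, ∑ a, d a * x ^ (a : ℕ) = 0) : d = 0 := by
  set p : R[X] := ∑ a, C (d a) * X ^ (a : ℕ)
  have hp : p = 0 := eq_zero_of_infinite_isRoot p <|
    (Set.finite_singleton x₀).infinite_compl.mono fun x hx => by
      simpa [p, eval_finsetSum] using h x hx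
  funext a
  simpa [p, finsetSum_coeff, coeff_C_mul_X_pow, Fin.val_inj] using congrArg (coeff · a) hp

theorem eq_zero_of_sub_sq_mul_sum_eq_zero [CommRing R] [IsDomain R] [Infinite R] {m n : ℕ}
    (c : Fin m → Fin n → R)
    (h : ∀ x z, (x - z) ^ 2 * ∑ a, ∑ b, c a b * x ^ (a : ℕ) * z ^ (b : ℕ) = 0) : c = 0 := by
  have hcol (x : R) : (fun b => ∑ a, c a b * x ^ (a : ℕ)) = 0 :=
    eq_zero_of_forall_ne_sum_mul_pow_eq_zero _ x fun z hz => by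
      have hxz := h x z
      rw [mul_eq_zero, or_iff_right (pow_ne_zero 2 (sub_ne_zero.2 hz.symm)), sum_comm] at hxz
      simpa [sum_mul] using hxz
  funext a b
  exact congrFun (eq_zero_of_forall_ne_sum_mul_pow_eq_zero (c · b) 0
    fun x _ => congrFun (hcol x) b) a

theorem eq_of_sub_sq_mul_sum_eq [CommRing R] [IsDomain R] [Infinite R] {m n : ℕ}
    (c c' : Fin m → Fin n → R)
    (h : ∀ x z, (x - z) ^ 2 * ∑ a, ∑ b, c a b * x ^ (a : ℕ) * z ^ (b : ℕ)
      = (x - z) ^ 2 * ∑ a, ∑ b, c' a b * x ^ (a : ℕ) * z ^ (b : ℕ)) : c = c' :=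
  sub_eq_zero.1 <| eq_zero_of_sub_sq_mul_sum_eq_zero (c - c') fun x z => by
    simp only [Pi.sub_apply, sub_mul, sum_sub_distrib, mul_sub, h, sub_self]

end

theorem genus_six_residual_matrix_sum_general
    (e : Fin 14 → ℂ)
    (lam : ℕ → ℂ)
    (hlam : ∀ x : ℂ, ∏ m, (x - e m) = ∑ k ∈ Finset.range 15, lam k * x ^ k)
    (F : ℂ → ℂ → ℂ)
    (hF : ∀ x z : ℂ, F x z = 2 * lam 14 * x ^ 7 * z ^ 7
        + ∑ k ∈ Finset.range 7,
            x ^ k * z ^ k * (2 * lam (2 * k) + (x + z) * lam (2 * k + 1)))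
    (L : Finset (Fin 14) → Matrix (Fin 6) (Fin 6) ℂ)
    (hL : ∀ S ∈ Finset.powersetCard 7 (Finset.univ : Finset (Fin 14)), ∀ x z : ℂ,
        (∏ i ∈ S, (x - e i)) * (∏ j ∈ Sᶜ, (z - e j))
          + (∏ i ∈ S, (z - e i)) * (∏ j ∈ Sᶜ, (x - e j)) - F x z
        = (x - z) ^ 2 * ∑ a, ∑ b, L S a b * x ^ (a : ℕ) * z ^ (b : ℕ)) :
    (1 / 2 : ℂ) • ∑ S ∈ Finset.powersetCard 7 (Finset.univ : Finset (Fin 14)), L S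
      = !![792 * lam 2, 330 * lam 3, 120 * lam 4, 36 * lam 5, 8 * lam 6, lam 7;
           330 * lam 3, 1080 * lam 4, 492 * lam 5, 184 * lam 6, 51 * lam 7, 8 * lam 8;
           120 * lam 4, 492 * lam 5, 1200 * lam 6, 542 * lam 7, 184 * lam 8, 36 * lam 9;
           36 * lam 5, 184 * lam 6, 542 * lam 7, 1200 * lam 8, 492 * lam 9, 120 * lam 10;
           8 * lam 6, 51 * lam 7, 184 * lam 8, 492 * lam 9, 1080 * lam 10, 330 * lam 11;
           lam 7, 8 * lam 8, 36 * lam 9, 120 * lam 10, 330 * lam 11, 792 * lam 12] := by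
  have hpart := sum_powersetCard_prod_sub_mul_prod_compl_sub e lam (by simpa using hlam) 7
  rw [Fintype.card_fin] at hpart
  have hsum : ∑ S ∈ powersetCard 7 univ, L S = (2 : ℂ) • genusSixMatrix lam := by
    refine eq_of_sub_sq_mul_sum_eq _ _ fun x z => ?_
    calc (x - z) ^ 2 * ∑ a, ∑ b, (∑ S ∈ powersetCard 7 univ, L S) a b * x ^ (a : ℕ) * z ^ (b : ℕ)
        = ∑ S ∈ powersetCard 7 univ,
            (x - z) ^ 2 * ∑ a, ∑ b, L S a b * x ^ (a : ℕ) * z ^ (b : ℕ) := by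
          simp only [Matrix.sum_apply, sum_mul, mul_sum]
          exact (sum_comm.trans (sum_congr rfl fun _ _ => sum_comm)).symm
      _ = ∑ S ∈ powersetCard 7 univ, ((∏ i ∈ S, (x - e i)) * (∏ j ∈ Sᶜ, (z - e j))
            + (∏ i ∈ S, (z - e i)) * (∏ j ∈ Sᶜ, (x - e j)) - F x z) :=
          (sum_congr rfl fun S hS => hL S hS x z).symm
      _ = binomialPartitionSum lam 14 7 x z + binomialPartitionSum lam 14 7 z x
            - (Nat.choose 14 7 : ℂ) * kleinianPolar lam 6 x z := by
          rw [sum_sub_distrib, sum_add_distrib, hpart, hpart, sum_const, card_powersetCard,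
            card_univ, Fintype.card_fin, nsmul_eq_mul, hF]
          rfl
      _ = _ := binomialPartitionSum_add_swap_sub_kleinianPolar_genus_six lam x z
  rw [hsum, smul_smul]
  norm_num [genusSixMatrix]

/-- genus 6, the matrix `Λ_6` of Example 6.5 of the paper, with the corrected
entry `792λ_2`: summing the partition matrices `Λ^{[S]}` over all 7-element subsets `S` of
the fourteen branch indices (twice the `N_6 = 1716` unordered partitions) and halving gives
the stated matrix `Λ_6`. -/
theorem genus_six_residual_matrix_sum
    (e : Fin 14 → ℂ)
    (lam : ℕ → ℂ)
    (hlam : ∀ x : ℂ, ∏ m, (x - e m) = ∑ k ∈ Finset.range 15, lam k * x ^ k)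
    (F : ℂ → ℂ → ℂ)
    (hF : ∀ x z : ℂ, F x z = 2 * lam 14 * x ^ 7 * z ^ 7
        + ∑ k ∈ Finset.range 7,
            x ^ k * z ^ k * (2 * lam (2 * k) + (x + z) * lam (2 * k + 1)))
    (L : Finset (Fin 14) → Matrix (Fin 6) (Fin 6) ℂ)
    (hLsymm : ∀ S ∈ Finset.powersetCard 7 (Finset.univ : Finset (Fin 14)), (L S).IsSymm)
    (hL : ∀ S ∈ Finset.powersetCard 7 (Finset.univ : Finset (Fin 14)), ∀ x z : ℂ,
        (∏ i ∈ S, (x - e i)) * (∏ j ∈ Sᶜ, (z - e j))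
          + (∏ i ∈ S, (z - e i)) * (∏ j ∈ Sᶜ, (x - e j)) - F x z
        = (x - z) ^ 2 * ∑ a, ∑ b, L S a b * x ^ (a : ℕ) * z ^ (b : ℕ)) :
    (1 / 2 : ℂ) • ∑ S ∈ Finset.powersetCard 7 (Finset.univ : Finset (Fin 14)), L S
      = !![792 * lam 2, 330 * lam 3, 120 * lam 4, 36 * lam 5, 8 * lam 6, lam 7;
           330 * lam 3, 1080 * lam 4, 492 * lam 5, 184 * lam 6, 51 * lam 7, 8 * lam 8;
           120 * lam 4, 492 * lam 5, 1200 * lam 6, 542 * lam 7, 184 * lam 8, 36 * lam 9;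
           36 * lam 5, 184 * lam 6, 542 * lam 7, 1200 * lam 8, 492 * lam 9, 120 * lam 10;
           8 * lam 6, 51 * lam 7, 184 * lam 8, 492 * lam 9, 1080 * lam 10, 330 * lam 11;
           lam 7, 8 * lam 8, 36 * lam 9, 120 * lam 10, 330 * lam 11, 792 * lam 12] :=
  genus_six_residual_matrix_sum_general e lam hlam F hF L hL
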